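/- arXiv:2411.02719 — 3 statements merged into one kernel-verified Lean document; each statement's English description precedes it below -/
import Mathlib

section
/- Let T_p > 0 and define k(t) = sec²(πt/(2T_p)) for t ∈ [0, T_p). Let θ > 0 and let V : [0, T_p) → ℝ be differentiable with V(0) > 0 and V'(t) = −θ·k(t)·V(t) for all t ∈ [0, T_p). Then V(t) = V(0)·exp(−(2θT_p/π)·tan(πt/(2T_p))) for all t ∈ [0, T_p), and V(t) → 0 as t → T_p from the left (prescribed-time stability at the prescribed time T_p). -/
open Real Set Filter Topology

/-!
With `G t = (2θT_p/π) tan(πt/(2T_p))` one has `G' = θ k`, so `V · exp G` has zero derivative on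
`[0, T_p)` and is therefore constant; this is the closed form. As `t → T_p⁻` the argument of `tan`
tends to `π/2` from below, so `G t → +∞` and `V t = V 0 · exp (-G t) → 0`.
-/

theorem Convex.eq_mul_exp_of_hasDerivWithinAt_neg_mul {s : Set ℝ} (hs : Convex ℝ s)
    {V G a : ℝ → ℝ} (hG : ∀ t ∈ s, HasDerivWithinAt G (a t) s t)
    (hV : ∀ t ∈ s, HasDerivWithinAt V (-a t * V t) s t) {t₀ t : ℝ} (ht₀ : t₀ ∈ s)
    (ht : t ∈ s) : V t = V t₀ * exp (G t₀ - G t) := by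
  have hF : ∀ x ∈ s, HasDerivWithinAt (fun x => V x * exp (G x)) 0 s x := fun x hx =>
    ((hV x hx).mul (hG x hx).exp).congr_deriv (by ring)
  have hconst : V t * exp (G t) = V t₀ * exp (G t₀) := by
    simpa [sub_eq_zero] using
      hs.norm_image_sub_le_of_norm_hasDerivWithin_le hF (fun _ _ => norm_zero.le) ht₀ ht
  rw [exp_sub, ← mul_div_assoc, ← hconst, mul_div_cancel_right₀ _ (exp_pos _).ne']

theorem pi_mul_div_two_mul_mem_Ioo {T t : ℝ} (hT : 0 < T) (ht : t ∈ Ico 0 T) :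
    π * t / (2 * T) ∈ Ioo (-(π / 2)) (π / 2) := by
  have hlt : π * t / (2 * T) < π / 2 := by
    rw [div_lt_div_iff₀ (by positivity) two_pos]
    nlinarith [mul_lt_mul_of_pos_left ht.2 pi_pos]
  have hnonneg : 0 ≤ π * t / (2 * T) := by
    have := ht.1
    positivity
  exact ⟨by linarith [pi_pos], hlt⟩

theorem hasDerivAt_tan_pi_mul_div_two_mul {T t : ℝ} (hT : 0 < T) (ht : t ∈ Ico 0 T) :
    HasDerivAt (fun t => tan (π * t / (2 * T)))
      (π / (2 * T) * (1 / cos (π * t / (2 * T)) ^ 2)) t := by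
  have hlin : HasDerivAt (fun t => π * t / (2 * T)) (π / (2 * T)) t := by
    simpa using ((hasDerivAt_id t).const_mul π).div_const (2 * T)
  exact ((hasDerivAt_tan_of_mem_Ioo (pi_mul_div_two_mul_mem_Ioo hT ht)).comp t hlin).congr_deriv
    (mul_comm _ _)

theorem tendsto_tan_pi_mul_div_two_mul_atTop {T : ℝ} (hT : 0 < T) :
    Tendsto (fun t => tan (π * t / (2 * T))) (𝓝[<] T) atTop := by
  refine tendsto_tan_pi_div_two.comp (tendsto_nhdsWithin_of_tendsto_nhds_of_eventually_within
    _ ?_ ?_)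
  · have hcont : Continuous fun t : ℝ => π * t / (2 * T) := by fun_prop
    have hval : π * T / (2 * T) = π / 2 := by field_simp
    simpa [hval] using (hcont.tendsto T).mono_left nhdsWithin_le_nhds
  · filter_upwards [Ico_mem_nhdsLT hT] with t ht
    exact (pi_mul_div_two_mul_mem_Ioo hT ht).2

theorem stmt0_general (Tp : ℝ) (hTp : 0 < Tp) (θ : ℝ) (hθ : 0 < θ)
    (V : ℝ → ℝ)
    (hV : ∀ t ∈ Ico (0 : ℝ) Tp,
      HasDerivWithinAt V (-θ * (1 / cos (π * t / (2 * Tp)) ^ 2) * V t) (Ico 0 Tp) t) :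
    (∀ t ∈ Ico (0 : ℝ) Tp,
      V t = V 0 * exp (-(2 * θ * Tp / π) * tan (π * t / (2 * Tp)))) ∧
    Tendsto V (nhdsWithin Tp (Iio Tp)) (nhds 0) := by
  set c := 2 * θ * Tp / π
  have hG : ∀ t ∈ Ico 0 Tp, HasDerivWithinAt (fun t => c * tan (π * t / (2 * Tp)))
      (θ * (1 / cos (π * t / (2 * Tp)) ^ 2)) (Ico 0 Tp) t := fun t ht => by
    refine ((hasDerivAt_tan_pi_mul_div_two_mul hTp ht).const_mul c).hasDerivWithinAt.congr_deriv ?_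
    simp only [c]
    field_simp
  have hformula : ∀ t ∈ Ico 0 Tp, V t = V 0 * exp (-c * tan (π * t / (2 * Tp))) := fun t ht => by
    simpa using (convex_Ico 0 Tp).eq_mul_exp_of_hasDerivWithinAt_neg_mul hG
      (fun x hx => by simpa only [neg_mul] using hV x hx) ⟨le_rfl, hTp⟩ ht
  refine ⟨hformula, ?_⟩
  have hdecay : Tendsto (fun t => V 0 * exp (-c * tan (π * t / (2 * Tp)))) (𝓝[<] Tp) (𝓝 0) := by
    simpa [neg_mul] using (tendsto_exp_neg_atTop_nhds_zero.comp
      ((tendsto_tan_pi_mul_div_two_mul_atTop hTp).const_mul_atTop (by positivity))).const_mul (V 0)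
  exact hdecay.congr' (eventually_of_mem (Ico_mem_nhdsLT hTp) fun t ht => (hformula t ht).symm)

/-- Lemma 3.1, prescribed-time stability of `V̇ = -θ k(t) V`.
If `V' (t) = -θ k(t) V(t)` on `[0, T_p)` with `k(t) = sec²(π t/(2 T_p))`, `θ > 0`,
`V(0) > 0`, then `V(t) = V(0) exp(-(2θT_p/π) tan(π t/(2T_p)))` and `V(t) → 0`
as `t → T_p⁻`. -/
theorem stmt0 (Tp : ℝ) (hTp : 0 < Tp) (θ : ℝ) (hθ : 0 < θ)
    (V : ℝ → ℝ) (hV0 : 0 < V 0)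
    (hV : ∀ t ∈ Ico (0 : ℝ) Tp,
      HasDerivWithinAt V (-θ * (1 / cos (π * t / (2 * Tp)) ^ 2) * V t) (Ico 0 Tp) t) :
    (∀ t ∈ Ico (0 : ℝ) Tp,
      V t = V 0 * exp (-(2 * θ * Tp / π) * tan (π * t / (2 * Tp)))) ∧
    Tendsto V (nhdsWithin Tp (Iio Tp)) (nhds 0) :=
  stmt0_general Tp hTp θ hθ V hV
end

section
/- Let T_p > 0 and define k(t) = sec²(πt/(2T_p)) for t ∈ [0, T_p). Let E be a finite-dimensional real normed vector space, let x : [0, T_p) → E, let M > 0 and θ > 0, and let V : [0, T_p) → ℝ be differentiable with V(t) ≥ M·‖x(t)‖² for all t ∈ [0, T_p) and V'(t) ≤ −θ·k(t)·V(t) for all t ∈ [0, T_p). Then for all t ∈ [0, T_p): 0 ≤ ‖x(t)‖² ≤ M⁻¹·exp(−(2θT_p/π)·tan(πt/(2T_p)))·V(0). -/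
/-!
Multiplying `V` by the integrating factor `exp (θ ∫ k) = exp ((2θT_p/π) tan (πt/(2T_p)))` turns
`V' ≤ -θ k V` into the statement that the product is nonincreasing, so
`V t ≤ exp (-(2θT_p/π) tan (πt/(2T_p))) V 0`; the bound on `‖x t‖²` then follows from
`M ‖x t‖² ≤ V t`.
-/

open Real Set

theorem antitoneOn_mul_exp_of_hasDerivWithinAt {D : Set ℝ} (hD : Convex ℝ D)
    {V V' g g' : ℝ → ℝ} (hV : ∀ t ∈ D, HasDerivWithinAt V (V' t) D t)
    (hg : ∀ t ∈ D, HasDerivWithinAt g (g' t) D t) (hVg : ∀ t ∈ D, V' t ≤ -g' t * V t) :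
    AntitoneOn (fun t => V t * exp (g t)) D := by
  have hF : ∀ t ∈ D, HasDerivWithinAt (fun t => V t * exp (g t))
      ((V' t + g' t * V t) * exp (g t)) D t := fun t ht =>
    ((hV t ht).mul (hg t ht).exp).congr_deriv (by ring)
  refine antitoneOn_of_hasDerivWithinAt_nonpos hD (fun t ht => (hF t ht).continuousWithinAt)
    (fun t ht => (hF t (interior_subset ht)).mono interior_subset) fun t ht => ?_
  exact mul_nonpos_of_nonpos_of_nonneg (by linarith [hVg t (interior_subset ht)]) (exp_nonneg _)

theorem le_exp_sub_mul_of_hasDerivWithinAt {D : Set ℝ} (hD : Convex ℝ D)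
    {V V' g g' : ℝ → ℝ} (hV : ∀ t ∈ D, HasDerivWithinAt V (V' t) D t)
    (hg : ∀ t ∈ D, HasDerivWithinAt g (g' t) D t) (hVg : ∀ t ∈ D, V' t ≤ -g' t * V t)
    {a t : ℝ} (ha : a ∈ D) (ht : t ∈ D) (hat : a ≤ t) :
    V t ≤ exp (g a - g t) * V a := by
  have h := antitoneOn_mul_exp_of_hasDerivWithinAt hD hV hg hVg ha ht hat
  rw [exp_sub, div_mul_eq_mul_div, le_div_iff₀ (exp_pos _)]
  linarith

theorem cos_pi_mul_div_pos {T t : ℝ} (ht : t ∈ Ico 0 T) : 0 < cos (π * t / (2 * T)) := by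
  have hT : 0 < T := ht.1.trans_lt ht.2
  apply cos_pos_of_mem_Ioo
  constructor
  · have : 0 ≤ π * t / (2 * T) := by have := ht.1; positivity
    linarith [pi_pos]
  · rw [div_lt_div_iff₀ (by positivity) two_pos]
    nlinarith [pi_pos, ht.2]

theorem hasDerivAt_tan_pi_mul_div {T t : ℝ} (hT : T ≠ 0) (hcos : cos (π * t / (2 * T)) ≠ 0) :
    HasDerivAt (fun s => 2 * T / π * tan (π * s / (2 * T))) (1 / cos (π * t / (2 * T)) ^ 2) t := by
  have hlin : HasDerivAt (fun s : ℝ => π * s / (2 * T)) (π / (2 * T)) t := by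
    simpa using ((hasDerivAt_id t).const_mul π).div_const (2 * T)
  refine (((hasDerivAt_tan hcos).comp t hlin).const_mul (2 * T / π)).congr_deriv ?_
  field_simp [pi_ne_zero]

theorem stmt3_general {E : Type*} [NormedAddCommGroup E]
    (Tp : ℝ) (M θ : ℝ) (hM : 0 < M)
    (x : ℝ → E) (V V' : ℝ → ℝ)
    (hVx : ∀ t ∈ Ico (0 : ℝ) Tp, M * ‖x t‖ ^ 2 ≤ V t)
    (hV : ∀ t ∈ Ico (0 : ℝ) Tp, HasDerivWithinAt V (V' t) (Ico 0 Tp) t)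
    (hV' : ∀ t ∈ Ico (0 : ℝ) Tp, V' t ≤ -θ * (1 / cos (π * t / (2 * Tp)) ^ 2) * V t) :
    ∀ t ∈ Ico (0 : ℝ) Tp,
      0 ≤ ‖x t‖ ^ 2 ∧
      ‖x t‖ ^ 2 ≤ M⁻¹ * exp (-(2 * θ * Tp / π) * tan (π * t / (2 * Tp))) * V 0 := by
  intro t ht
  have hTp : 0 < Tp := ht.1.trans_lt ht.2
  set g : ℝ → ℝ := fun s => θ * (2 * Tp / π * tan (π * s / (2 * Tp)))
  have hg : ∀ s ∈ Ico 0 Tp,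
      HasDerivWithinAt g (θ * (1 / cos (π * s / (2 * Tp)) ^ 2)) (Ico 0 Tp) s := fun s hs =>
    ((hasDerivAt_tan_pi_mul_div hTp.ne' (cos_pi_mul_div_pos hs).ne').const_mul θ).hasDerivWithinAt
  have hVt : V t ≤ exp (g 0 - g t) * V 0 :=
    le_exp_sub_mul_of_hasDerivWithinAt (convex_Ico 0 Tp) hV hg
      (fun s hs => by linarith [hV' s hs]) ⟨le_rfl, hTp⟩ ht ht.1
  have hg_sub : g 0 - g t = -(2 * θ * Tp / π) * tan (π * t / (2 * Tp)) := by
    simp only [g, mul_zero, zero_div, tan_zero]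
    ring
  refine ⟨by positivity, ?_⟩
  rw [← hg_sub, mul_assoc, le_inv_mul_iff₀ hM]
  exact (hVx t ht).trans hVt

/-- the explicit bound `0 ≤ ‖x(t)‖² ≤ M⁻¹ exp(-(2θT_p/π) tan(π t/(2T_p))) V(0)`
from the Lyapunov inequality `V' ≤ -θ k V`, `V ≥ M‖x‖²`. -/
theorem stmt3 {E : Type*} [NormedAddCommGroup E] [NormedSpace ℝ E] [FiniteDimensional ℝ E]
    (Tp : ℝ) (hTp : 0 < Tp) (M θ : ℝ) (hM : 0 < M) (hθ : 0 < θ)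
    (x : ℝ → E) (V V' : ℝ → ℝ)
    (hVx : ∀ t ∈ Ico (0 : ℝ) Tp, M * ‖x t‖ ^ 2 ≤ V t)
    (hV : ∀ t ∈ Ico (0 : ℝ) Tp, HasDerivWithinAt V (V' t) (Ico 0 Tp) t)
    (hV' : ∀ t ∈ Ico (0 : ℝ) Tp, V' t ≤ -θ * (1 / cos (π * t / (2 * Tp)) ^ 2) * V t) :
    ∀ t ∈ Ico (0 : ℝ) Tp,
      0 ≤ ‖x t‖ ^ 2 ∧
      ‖x t‖ ^ 2 ≤ M⁻¹ * exp (-(2 * θ * Tp / π) * tan (π * t / (2 * Tp))) * V 0 :=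
  stmt3_general Tp M θ hM x V V' hVx hV hV'
end

section
/- Let N ≥ 1, let n₁, …, n_N be positive integers with n = Σᵢ nᵢ, and consider ℝ^{Nn} whose elements X consist of N blocks x^i ∈ ℝⁿ. Let 𝓡ᵢ ∈ ℝ^{nᵢ×n} be the selection matrix extracting the i-th sub-block of a vector in ℝⁿ, and let 𝓡 ∈ ℝ^{n×Nn} be the block-diagonal matrix diag(𝓡₁, …, 𝓡_N). Let P_C = (1/N)(1_N 1_N^⊤) ⊗ I_n, and for X ∈ ℝ^{Nn} write X^∥ = P_C X = 1_N ⊗ x (where x = (1/N)Σᵢ x^i) and X^⊥ = X − X^∥. Let F : ℝ^{Nn} → ℝⁿ be l-Lipschitz continuous, and suppose the map x ↦ F(1_N ⊗ x) from ℝⁿ to ℝⁿ is μ-strongly monotone, with l, μ > 0. Then for every X ∈ ℝ^{Nn} and x* ∈ ℝⁿ, setting X̃ = 1_N ⊗ x*: (X − X̃)^⊤ 𝓡^⊤ (F(X) − F(X̃)) ≥ −l·‖X^⊥‖² − 2l·‖X^⊥‖·‖X^∥ − X̃‖ + (μ/N)·‖X^∥ − X̃‖². -/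
/-!
Split `X - X̃ = X^⊥ + (X^∥ - X̃)` and `F X - F X̃ = (F X - F X^∥) + (F X^∥ - F X̃)`. Since `𝓡` is a
coordinate selection it does not increase norms, so by Cauchy–Schwarz and the Lipschitz bound every
cross term costs at most `l ‖X^⊥‖ (‖X^⊥‖ + ‖X^∥ - X̃‖)` or `l ‖X^⊥‖ ‖X^∥ - X̃‖`. What remains is
`⟪𝓡 (X^∥ - X̃), F X^∥ - F X̃⟫`, and on the consensus subspace `𝓡 (1_N ⊗ v) = v` with
`‖1_N ⊗ v‖² = N ‖v‖²`, so strong monotonicity of the pseudo-gradient bounds it by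
`(μ/N) ‖X^∥ - X̃‖²`.
-/

open Finset
open scoped RealInnerProductSpace

noncomputable section

/-- `ℝⁿ` with `n = ∑ᵢ nᵢ`, realized as the `ℓ²`-product of the players'
individual action spaces `ℝ^{nᵢ}`. -/
abbrev Rn (N : ℕ) (nd : Fin N → ℕ) :=
  PiLp 2 (fun i : Fin N => EuclideanSpace ℝ (Fin (nd i)))

/-- `ℝ^{Nn}`: `N` stacked copies (the estimate blocks `x¹, …, x^N`) of `ℝⁿ`. -/
abbrev Big (N : ℕ) (nd : Fin N → ℕ) := PiLp 2 (fun _ : Fin N => Rn N nd)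

/-- The selection map `𝓡 = diag(𝓡₁, …, 𝓡_N) : ℝ^{Nn} → ℝⁿ`, where `𝓡ᵢ`
extracts the `i`-th sub-block: `(𝓡 X)ᵢ = (xⁱ)ᵢ`. -/
def selR {N : ℕ} {nd : Fin N → ℕ} (X : Big N nd) : Rn N nd := WithLp.toLp 2 (fun i => X i i)

lemma neg_mul_le_real_inner {E : Type*} [NormedAddCommGroup E] [InnerProductSpace ℝ E]
    {x y : E} {a b : ℝ} (hx : ‖x‖ ≤ a) (hy : ‖y‖ ≤ b) : -(a * b) ≤ ⟪x, y⟫ :=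
  neg_le_of_abs_le <| (abs_real_inner_le_norm x y).trans <|
    mul_le_mul hx hy (norm_nonneg y) ((norm_nonneg x).trans hx)

lemma inner_map_sub_le_of_lipschitz {H E : Type*} [SeminormedAddCommGroup H]
    [NormedAddCommGroup E] [InnerProductSpace ℝ E] (R : H →+ E) (hR : ∀ z, ‖R z‖ ≤ ‖z‖)
    {F : H → E} {l : ℝ} (hl : 0 ≤ l) (hF : ∀ x y, ‖F x - F y‖ ≤ l * ‖x - y‖) (x p t : H) :
    ⟪R (p - t), F p - F t⟫ - l * ‖x - p‖ ^ 2 - 2 * l * ‖x - p‖ * ‖p - t‖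
      ≤ ⟪R (x - t), F x - F t⟫ := by
  have hsplit : ⟪R (x - t), F x - F t⟫
      = ⟪R (x - p), F x - F t⟫ + ⟪R (p - t), F x - F p⟫ + ⟪R (p - t), F p - F t⟫ := by
    rw [← sub_add_sub_cancel x p t, map_add, inner_add_left, ← sub_add_sub_cancel (F x) (F p) (F t),
      inner_add_right (R (p - t))]
    ring
  have hxt : ‖F x - F t‖ ≤ l * (‖x - p‖ + ‖p - t‖) :=
    (hF x t).trans <| mul_le_mul_of_nonneg_left (norm_sub_le_norm_sub_add_norm_sub x p t) hl
  have hperp := neg_mul_le_real_inner (hR (x - p)) hxt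
  have hcross := neg_mul_le_real_inner (hR (p - t)) (hF x p)
  linarith

lemma norm_sq_toLp_const {ι E : Type*} [Fintype ι] [SeminormedAddCommGroup E] (v : E) :
    ‖(WithLp.toLp 2 (fun _ : ι => v) : PiLp 2 (fun _ : ι => E))‖ ^ 2
      = Fintype.card ι * ‖v‖ ^ 2 := by
  rw [PiLp.norm_sq_eq_of_L2, WithLp.ofLp_toLp, Finset.sum_const, Finset.card_univ, nsmul_eq_mul]

section Selection

variable {N : ℕ} {nd : Fin N → ℕ}

lemma selR_add (X Y : Big N nd) : selR (X + Y) = selR X + selR Y := rfl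

lemma selR_toLp_const (v : Rn N nd) : selR (WithLp.toLp 2 (fun _ => v) : Big N nd) = v := rfl

lemma norm_selR_le (Z : Big N nd) : ‖selR Z‖ ≤ ‖Z‖ := by
  refine (sq_le_sq₀ (norm_nonneg _) (norm_nonneg _)).1 ?_
  rw [PiLp.norm_sq_eq_of_L2, PiLp.norm_sq_eq_of_L2]
  gcongr with i
  exact PiLp.norm_apply_le (Z i) i

end Selection

theorem stmt10_general {N : ℕ} (hN : 1 ≤ N) (nd : Fin N → ℕ)
    (l μ : ℝ) (hl : 0 < l)
    (F : Big N nd → Rn N nd)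
    (hLip : ∀ X Y : Big N nd, ‖F X - F Y‖ ≤ l * ‖X - Y‖)
    (hMono : ∀ x y : Rn N nd,
      μ * ‖x - y‖ ^ 2 ≤ ⟪x - y, F (WithLp.toLp 2 (fun _ => x)) - F (WithLp.toLp 2 (fun _ => y))⟫)
    (X : Big N nd) (xstar : Rn N nd)
    (Xt : Big N nd) (hXt : Xt = WithLp.toLp 2 (fun _ => xstar))
    (Xpar : Big N nd) (hXpar : Xpar = WithLp.toLp 2 (fun _ => (N : ℝ)⁻¹ • ∑ i, X i))
    (Xperp : Big N nd) (hXperp : Xperp = X - Xpar) :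
    -(l * ‖Xperp‖ ^ 2) - 2 * l * ‖Xperp‖ * ‖Xpar - Xt‖ + μ / N * ‖Xpar - Xt‖ ^ 2
      ≤ ⟪selR (X - Xt), F X - F Xt⟫ := by
  set v : Rn N nd := (N : ℝ)⁻¹ • ∑ i, X i - xstar
  have hconsensus : Xpar - Xt = WithLp.toLp 2 (fun _ => v) := by
    subst hXpar hXt
    rfl
  have hmono : μ / N * ‖Xpar - Xt‖ ^ 2 ≤ ⟪selR (Xpar - Xt), F Xpar - F Xt⟫ := by
    have hN0 : (N : ℝ) ≠ 0 := by positivity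
    rw [hconsensus, norm_sq_toLp_const, Fintype.card_fin, selR_toLp_const,
      show μ / N * (N * ‖v‖ ^ 2) = μ * ‖v‖ ^ 2 by field_simp, hXpar, hXt]
    exact hMono _ xstar
  have hshift := inner_map_sub_le_of_lipschitz (AddMonoidHom.mk' selR selR_add) norm_selR_le
    hl.le hLip X Xpar Xt
  rw [← hXperp] at hshift
  simp only [AddMonoidHom.mk'_apply] at hshift
  linarith

/-- the estimate for `V̇₁`. If the extended pseudo-gradient
`F` is `l`-Lipschitz and `x ↦ F(1_N ⊗ x)` is `μ`-strongly monotone, then with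
`X̃ = 1_N ⊗ x*`, `X^∥ = 1_N ⊗ ((1/N)∑ᵢ xⁱ)`, `X^⊥ = X - X^∥`:
`(X - X̃)ᵀ 𝓡ᵀ (F(X) - F(X̃)) ≥ -l‖X^⊥‖² - 2l‖X^⊥‖‖X^∥ - X̃‖ + (μ/N)‖X^∥ - X̃‖²`. -/
theorem stmt10 {N : ℕ} (hN : 1 ≤ N) (nd : Fin N → ℕ) (hnd : ∀ i, 1 ≤ nd i)
    (l μ : ℝ) (hl : 0 < l) (hμ : 0 < μ)
    (F : Big N nd → Rn N nd)
    (hLip : ∀ X Y : Big N nd, ‖F X - F Y‖ ≤ l * ‖X - Y‖)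
    (hMono : ∀ x y : Rn N nd,
      μ * ‖x - y‖ ^ 2 ≤ ⟪x - y, F (WithLp.toLp 2 (fun _ => x)) - F (WithLp.toLp 2 (fun _ => y))⟫)
    (X : Big N nd) (xstar : Rn N nd)
    (Xt : Big N nd) (hXt : Xt = WithLp.toLp 2 (fun _ => xstar))
    (Xpar : Big N nd) (hXpar : Xpar = WithLp.toLp 2 (fun _ => (N : ℝ)⁻¹ • ∑ i, X i))
    (Xperp : Big N nd) (hXperp : Xperp = X - Xpar) :
    -(l * ‖Xperp‖ ^ 2) - 2 * l * ‖Xperp‖ * ‖Xpar - Xt‖ + μ / N * ‖Xpar - Xt‖ ^ 2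
      ≤ ⟪selR (X - Xt), F X - F Xt⟫ :=
  stmt10_general hN nd l μ hl F hLip hMono X xstar Xt hXt Xpar hXpar Xperp hXperp

end
end
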